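/- If ε = −1 in the bilinear form a and τ > 2 C_max², then a is elliptic on V_h: with C := min{1/2, (τ − 2C_max²)/τ} and α := C/(1 + C_max²), for all (v_h, ṽ_h) ∈ V_h one has a((v_h,ṽ_h),(v_h,ṽ_h)) ≥ α |||(v_h,ṽ_h)|||². -/

import Mathlib

open MeasureTheory RealInnerProductSpace

noncomputable section

/-! ## Basic geometric and functional analytic framework -/

/-- The Euclidean plane `ℝ²`. -/
abbrev E2 : Type := EuclideanSpace ℝ (Fin 2)

/-- The `i`-th standard basis vector of `ℝ²`. -/
def e2 (i : Fin 2) : E2 := EuclideanSpace.single i 1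

/-- Rotation of a vector by `π/2` (used to produce normal vectors). -/
def rot90 (v : E2) : E2 := EuclideanSpace.single 0 (-(v 1)) + EuclideanSpace.single 1 (v 0)

/-- A (possibly degenerate-free) triangle in the plane, given by its three
affinely independent vertices. -/
structure Tri : Type where
  V : Fin 3 → E2
  indep : AffineIndependent ℝ V

namespace Tri

/-- The closed triangle, as a subset of the plane. -/
def toSet (K : Tri) : Set E2 := convexHull ℝ (Set.range K.V)

/-- `h_K`, the diameter of the triangle `K`. -/
def diam (K : Tri) : ℝ := Metric.diam K.toSet

/-- The radius of the largest ball inscribed in `K`. -/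
def inradius (K : Tri) : ℝ := sSup {r : ℝ | ∃ x : E2, Metric.ball x r ⊆ K.toSet}

/-- The closed edge of `K` opposite to the vertex `i`. -/
def edge (K : Tri) (i : Fin 3) : Set E2 := segment ℝ (K.V (i + 1)) (K.V (i + 2))

/-- The relatively open edge of `K` opposite to the vertex `i`
(the edge without its two endpoints). -/
def edgeO (K : Tri) (i : Fin 3) : Set E2 := K.edge i \ {K.V (i + 1), K.V (i + 2)}

end Tri

/-- Lexicographic positivity of a vector; used to fix a canonical orientation of edges. -/
def lexPos (v : E2) : Prop := 0 < v 0 ∨ (v 0 = 0 ∧ 0 < v 1)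

open Classical in
/-- A canonical unit tangent vector of the segment `[a, b]`,
independent of the order in which the endpoints are given. -/
def canonTangent (a b : E2) : E2 :=
  if lexPos (b - a) then ‖b - a‖⁻¹ • (b - a) else ‖a - b‖⁻¹ • (a - b)

namespace Tri

/-- The unit tangent vector `t` of the edge `i` of `K`. -/
def tangent (K : Tri) (i : Fin 3) : E2 := canonTangent (K.V (i + 1)) (K.V (i + 2))

open Classical in
/-- The outward unit normal vector `n` of the edge `i` of `K`
(one has `n ⬝ t = 0`). -/
def normal (K : Tri) (i : Fin 3) : E2 :=
  if 0 < ⟪‖rot90 (K.V (i + 2) - K.V (i + 1))‖⁻¹ • rot90 (K.V (i + 2) - K.V (i + 1)),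
        K.V i - K.V (i + 1)⟫ then
    -(‖rot90 (K.V (i + 2) - K.V (i + 1))‖⁻¹ • rot90 (K.V (i + 2) - K.V (i + 1)))
  else
    ‖rot90 (K.V (i + 2) - K.V (i + 1))‖⁻¹ • rot90 (K.V (i + 2) - K.V (i + 1))

end Tri

/-- Shape regularity of a triangle with parameter `ρ`: the triangle of a shape-regular
family satisfy `ρ h_K ≤ r_K`, where `r_K` is the inradius. -/
def ShapeRegular (ρ : ℝ) (K : Tri) : Prop := ρ * K.diam ≤ K.inradius

/-- `f` coincides on `S` with a (bivariate) polynomial of total degree at most `d`,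
i.e. `f|_S ∈ P_d(S)`. -/
def IsPolyOn (d : ℕ) (S : Set E2) (f : E2 → ℝ) : Prop :=
  ∃ p : MvPolynomial (Fin 2) ℝ, p.totalDegree ≤ d ∧
    ∀ x ∈ S, f x = MvPolynomial.eval (fun i => x i) p

/-- Vector-valued version of `IsPolyOn`: `v|_S ∈ [P_d(S)]²`. -/
def IsPolyVecOn (d : ℕ) (S : Set E2) (v : E2 → E2) : Prop :=
  ∀ c : Fin 2, IsPolyOn d S (fun x => v x c)

/-- The partial derivative (within `S`) in the `i`-th coordinate direction. -/
def dWi (S : Set E2) (i : Fin 2) (f : E2 → ℝ) : E2 → ℝ :=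
  fun x => fderivWithin ℝ f S x (e2 i)

/-- The iterated partial derivative `∂₀^j ∂₁^l` (within `S`). -/
def pderivW (S : Set E2) (j l : ℕ) (f : E2 → ℝ) : E2 → ℝ :=
  (dWi S 0)^[j] ((dWi S 1)^[l] f)

/-- The squared Sobolev seminorm `|f|²_{H^m(S)} = ∑_{|α| = m} ‖∂^α f‖²_{L²(S)}`. -/
def sobSemiSq (m : ℕ) (S : Set E2) (f : E2 → ℝ) : ℝ :=
  ∑ j ∈ Finset.range (m + 1), ∫ x in S, (pderivW S j (m - j) f x) ^ 2

/-- The Sobolev seminorm `|f|_{H^m(S)}`. -/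
def sobSemi (m : ℕ) (S : Set E2) (f : E2 → ℝ) : ℝ := Real.sqrt (sobSemiSq m S f)

/-- The squared Sobolev seminorm of a vector field, `|v|²_{H^m(S)}`. -/
def sobSemiVecSq (m : ℕ) (S : Set E2) (v : E2 → E2) : ℝ :=
  ∑ c : Fin 2, sobSemiSq m S (fun x => v x c)

/-- The Sobolev seminorm of a vector field, `|v|_{H^m(S)}`. -/
def sobSemiVec (m : ℕ) (S : Set E2) (v : E2 → E2) : ℝ := Real.sqrt (sobSemiVecSq m S v)

/-- Squared `L²(S)` norm. -/
def l2Sq (S : Set E2) (f : E2 → ℝ) : ℝ := ∫ x in S, (f x) ^ 2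

/-- `L²(S)` norm. -/
def l2N (S : Set E2) (f : E2 → ℝ) : ℝ := Real.sqrt (l2Sq S f)

/-- Squared `L²(S)` norm of a vector field. -/
def l2VecSq (S : Set E2) (v : E2 → E2) : ℝ := ∫ x in S, ‖v x‖ ^ 2

/-- `L²(S)` norm of a vector field. -/
def l2VecN (S : Set E2) (v : E2 → E2) : ℝ := Real.sqrt (l2VecSq S v)

/-- The full Sobolev norm `‖f‖_{H^m(S)}`. -/
def hmNorm (m : ℕ) (S : Set E2) (f : E2 → ℝ) : ℝ :=
  Real.sqrt (∑ j ∈ Finset.range (m + 1), sobSemiSq j S f)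

/-- The full Sobolev norm `‖v‖_{H^m(S)}` of a vector field. -/
def hmNormVec (m : ℕ) (S : Set E2) (v : E2 → E2) : ℝ :=
  Real.sqrt (∑ j ∈ Finset.range (m + 1), sobSemiVecSq j S v)

/-- The squared `L²(∂K)` norm: the boundary of a triangle is the union of its three edges,
and carries the one-dimensional Hausdorff (arc-length) measure. -/
def bdrySq (K : Tri) (f : E2 → ℝ) : ℝ :=
  ∑ i : Fin 3, ∫ x in K.edge i, (f x) ^ 2 ∂(μH[1])

/-- The `L²(∂K)` norm. -/
def bdryN (K : Tri) (f : E2 → ℝ) : ℝ := Real.sqrt (bdrySq K f)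

/-! ## Projection and interpolation operators -/

open Classical in
/-- The `L²(S, μ)`-orthogonal projection onto polynomials of degree at most `d` on `S`,
characterised by the orthogonality relation `∫_S (f - Pf) q dμ = 0` for all `q ∈ P_d(S)`. -/
def l2Proj (d : ℕ) (S : Set E2) (μ : Measure E2) (f : E2 → ℝ) : E2 → ℝ :=
  Classical.epsilon fun g => IsPolyOn d S g ∧
    ∀ q : E2 → ℝ, IsPolyOn d S q → ∫ x in S, (f x - g x) * q x ∂μ = 0

/-- The `L²(E)`-orthogonal projection `Φ^d_E` onto `P_d(E)` on an edge `E`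
(with respect to the arc-length measure). -/
def edgeProj (d : ℕ) (E : Set E2) (f : E2 → ℝ) : E2 → ℝ := l2Proj d E μH[1] f

/-- The local `L²(K)`-orthogonal projection `Ψ^d_K` onto `P_d(K)`. -/
def elemProj (d : ℕ) (K : Tri) (f : E2 → ℝ) : E2 → ℝ := l2Proj d K.toSet volume f

/-- Gradient within `S`. -/
def gradW (S : Set E2) (f : E2 → ℝ) (x : E2) : E2 := ∑ i : Fin 2, dWi S i f x • e2 i

/-- Divergence within `S`. -/
def divW (S : Set E2) (v : E2 → E2) (x : E2) : ℝ :=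
  ∑ i : Fin 2, ⟪fderivWithin ℝ v S x (e2 i), e2 i⟫

open Classical in
/-- The canonical local Brezzi-Douglas-Marini interpolation operator `Π^k` on a
triangle `K`, characterised by its degrees of freedom: `Π^k v ∈ [P_k(K)]²` with
* matching moments of the normal component against `P_k(E)` on every edge `E`;
* matching interior moments against gradients of `P_{k-1}(K)`;
* matching interior moments against divergence-free fields in `[P_k(K)]²` whose
  normal component vanishes on `∂K`. -/
def bdmInterp (k : ℕ) (K : Tri) (v : E2 → E2) : E2 → E2 :=
  Classical.epsilon fun w => IsPolyVecOn k Set.univ w ∧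
    (∀ i : Fin 3, ∀ q : E2 → ℝ, IsPolyOn k Set.univ q →
      ∫ x in K.edge i, ⟪w x - v x, K.normal i⟫ * q x ∂(μH[1]) = 0) ∧
    (∀ q : E2 → ℝ, IsPolyOn (k - 1) Set.univ q →
      ∫ x in K.toSet, ⟪w x - v x, gradW Set.univ q x⟫ = 0) ∧
    (∀ z : E2 → E2, IsPolyVecOn k Set.univ z → (∀ x : E2, divW Set.univ z x = 0) →
      (∀ i : Fin 3, ∀ x ∈ K.edge i, ⟪z x, K.normal i⟫ = 0) →
      ∫ x in K.toSet, ⟪w x - v x, z x⟫ = 0)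

/-! ## Triangulations, discrete spaces, bilinear forms and mesh-dependent norms -/

/-- A conforming triangulation `T_h` of a bounded open polygonal domain `Ω ⊂ ℝ²`. -/
structure Mesh : Type where
  /-- the computational domain `Ω` -/
  Ω : Set E2
  /-- the triangles of the triangulation -/
  T : Finset Tri
  isOpen_Ω : IsOpen Ω
  nonempty_Ω : Ω.Nonempty
  bounded_Ω : Bornology.IsBounded Ω
  connected_Ω : IsConnected Ω
  /-- the triangles cover the closure of `Ω` -/
  cover : (⋃ K ∈ T, Tri.toSet K) = closure Ω
  /-- distinct triangles have disjoint interiors -/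
  disjoint_interiors : ∀ K ∈ T, ∀ K' ∈ T, K ≠ K' →
    interior (Tri.toSet K) ∩ interior (Tri.toSet K') = ∅
  /-- the triangulation is conforming: two distinct triangles intersect in nothing,
  a common vertex, or a common (full) edge -/
  conforming : ∀ K ∈ T, ∀ K' ∈ T, K ≠ K' →
    (Tri.toSet K ∩ Tri.toSet K' = ∅) ∨
    (∃ a : E2, Tri.toSet K ∩ Tri.toSet K' = {a} ∧ a ∈ Set.range K.V ∧ a ∈ Set.range K'.V) ∨
    (∃ i j, Tri.toSet K ∩ Tri.toSet K' = Tri.edge K i ∧ Tri.edge K i = Tri.edge K' j)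
  /-- every edge either lies on the boundary `Γ = ∂Ω`, or is shared with exactly
  one other triangle -/
  edge_dichotomy : ∀ K ∈ T, ∀ i : Fin 3,
    Tri.edge K i ⊆ frontier Ω ∨
    ∃ K' ∈ T, K' ≠ K ∧ ∃ j : Fin 3, Tri.edge K' j = Tri.edge K i

/-- A broken (elementwise) vector field: the discrete velocities and the broken
Sobolev functions are represented by their restrictions to each element. -/
abbrev Vb : Type := Tri → E2 → E2

/-- Membership in the Brezzi-Douglas-Marini space
`BDM_h^k = {v ∈ H(div, Ω) : v|_K ∈ [P_k(K)]² ∀ K ∈ T_h}`: each piece is a polynomial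
of degree at most `k` and the normal component is continuous across interelement
edges (which is equivalent to `H(div)`-conformity for piecewise polynomials). -/
def MemBDM (M : Mesh) (k : ℕ) (v : Vb) : Prop :=
  (∀ K ∈ M.T, IsPolyVecOn k (Tri.toSet K) (v K)) ∧
  (∀ K ∈ M.T, ∀ K' ∈ M.T, ∀ i j, Tri.edge K i = Tri.edge K' j →
    ∀ x ∈ Tri.edge K i, ⟪v K x, Tri.normal K i⟫ = ⟪v K' x, Tri.normal K i⟫)

/-- Membership in the Lagrange multiplier space
`M_h^d = {g ∈ L²(E_h) : g|_E ∈ P_d(E) ∀ E ∈ E_h}` (the multiplier lives on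
the skeleton; the values at the finitely many vertices are irrelevant). -/
def MemM (M : Mesh) (d : ℕ) (g : E2 → ℝ) : Prop :=
  ∀ K ∈ M.T, ∀ i : Fin 3, IsPolyOn d (Tri.edgeO K i) g

/-- Membership in `M_{h,0}^d = {g ∈ M_h^d : g = 0 on Γ}`. -/
def MemM0 (M : Mesh) (d : ℕ) (g : E2 → ℝ) : Prop :=
  MemM M d g ∧ ∀ x ∈ frontier M.Ω, g x = 0

/-- Membership in the (discontinuous) pressure space
`Q_h^d = {q ∈ L²(Ω) : q|_K ∈ P_d(K) ∀ K ∈ T_h}`. -/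
def MemQ (M : Mesh) (d : ℕ) (q : E2 → ℝ) : Prop :=
  ∀ K ∈ M.T, IsPolyOn d (interior (Tri.toSet K)) q

/-- `f ∈ L²(S)`. -/
def MemL2 (S : Set E2) (f : E2 → ℝ) : Prop := MemLp f 2 (volume.restrict S)

/-- `v ∈ [L²(S)]²`. -/
def MemL2Vec (S : Set E2) (v : E2 → E2) : Prop := MemLp v 2 (volume.restrict S)

/-- `g ∈ L²(E_h)`: square integrable on every edge of the triangulation. -/
def MemL2Edges (M : Mesh) (g : E2 → ℝ) : Prop :=
  ∀ K ∈ M.T, ∀ i : Fin 3, MemLp g 2 (μH[1].restrict (Tri.edge K i))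

/-- `g ∈ L²(Γ)`. -/
def MemL2Bdry (M : Mesh) (g : E2 → ℝ) : Prop :=
  MemLp g 2 (μH[1].restrict (frontier M.Ω))

/-- A broken vector field in `[H¹(Ω) ∩ H^m(T_h)]²` (strong form): each piece has
`m` continuous derivatives up to the boundary of its element, and the pieces agree
on interelement boundaries (`H¹(Ω)`-conformity). -/
def MemH1Hm (M : Mesh) (m : ℕ) (u : Vb) : Prop :=
  (∀ K ∈ M.T, ∀ c : Fin 2, ContDiffOn ℝ m (fun x => u K x c) (Tri.toSet K)) ∧
  (∀ K ∈ M.T, ∀ K' ∈ M.T, ∀ x ∈ Tri.toSet K ∩ Tri.toSet K', u K x = u K' x)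

/-- The tangential component `(v)_t` of `v` on the edge `i` of `K`. -/
def tComp (K : Tri) (i : Fin 3) (v : E2 → E2) : E2 → ℝ := fun x => ⟪v x, K.tangent i⟫

/-- The tangential component `(∂_n v)_t` of the normal derivative of `v`
on the edge `i` of `K` (the trace is taken from inside `K`). -/
def dnt (K : Tri) (i : Fin 3) (v : E2 → E2) : E2 → ℝ :=
  fun x => ⟪fderivWithin ℝ v (Tri.toSet K) x (K.normal i), K.tangent i⟫

/-- The hdG velocity bilinear form `a((w, w̃), (v, ṽ))` with viscosity `ν`,
stabilisation parameter `τ` and symmetry parameter `ε ∈ {-1, 1}`. -/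
def aForm (M : Mesh) (k : ℕ) (ν τ ε : ℝ) (w : Vb) (wt : E2 → ℝ) (v : Vb) (vt : E2 → ℝ) : ℝ :=
  ∑ K ∈ M.T,
    ((∫ x in Tri.toSet K, ν * ∑ c : Fin 2,
        ⟪fderivWithin ℝ (w K) (Tri.toSet K) x (e2 c),
          fderivWithin ℝ (v K) (Tri.toSet K) x (e2 c)⟫)
      - ∑ i : Fin 3, ∫ x in Tri.edge K i,
          ν * dnt K i (w K) x * (tComp K i (v K) x - vt x) ∂(μH[1])
      + ε * ∑ i : Fin 3, ∫ x in Tri.edge K i,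
          ν * (tComp K i (w K) x - wt x) * dnt K i (v K) x ∂(μH[1])
      + ν * (τ / K.diam) * ∑ i : Fin 3, ∫ x in Tri.edge K i,
          edgeProj (k - 1) (Tri.edge K i) (fun y => tComp K i (w K) y - wt y) x *
            edgeProj (k - 1) (Tri.edge K i) (fun y => tComp K i (v K) y - vt y) x ∂(μH[1]))

/-- The hdG pressure-velocity bilinear form `b((v, ṽ), q) = -∑_K ∫_K q ∇⬝v`. -/
def bForm (M : Mesh) (v : Vb) (q : E2 → ℝ) : ℝ :=
  - ∑ K ∈ M.T, ∫ x in Tri.toSet K, q x * divW (Tri.toSet K) (v K) x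

/-- The squared mesh-dependent norm
`|||(w, w̃)|||² = ν ∑_K (|w|²_{H¹(K)} + h_K ‖∂_n w‖²_{∂K} + (τ/h_K) ‖Φ^{k-1}((w)_t - w̃)‖²_{∂K})`. -/
def tnormSq (M : Mesh) (k : ℕ) (ν τ : ℝ) (w : Vb) (wt : E2 → ℝ) : ℝ :=
  ν * ∑ K ∈ M.T,
    (sobSemiVecSq 1 (Tri.toSet K) (w K)
      + K.diam * ∑ i : Fin 3, ∫ x in Tri.edge K i,
          ‖fderivWithin ℝ (w K) (Tri.toSet K) x (K.normal i)‖ ^ 2 ∂(μH[1])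
      + (τ / K.diam) * ∑ i : Fin 3, ∫ x in Tri.edge K i,
          (edgeProj (k - 1) (Tri.edge K i) (fun y => tComp K i (w K) y - wt y) x) ^ 2 ∂(μH[1]))

/-- The mesh-dependent norm `|||(w, w̃)|||`. -/
def tnorm (M : Mesh) (k : ℕ) (ν τ : ℝ) (w : Vb) (wt : E2 → ℝ) : ℝ :=
  Real.sqrt (tnormSq M k ν τ w wt)

/-- The full triple norm `|||(w, w̃, r)|||_h = |||(w, w̃)||| + ν^{-1/2} ‖r‖_{L²(Ω)}`. -/
def tnormH (M : Mesh) (k : ℕ) (ν τ : ℝ) (w : Vb) (wt : E2 → ℝ) (r : E2 → ℝ) : ℝ :=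
  tnorm M k ν τ w wt + (Real.sqrt ν)⁻¹ * l2N M.Ω r

/-- `Cmax` is a constant for the discrete trace inequality
`h_K^{1/2} ‖p‖_{L²(∂K)} ≤ Cmax ‖p‖_{L²(K)}` for polynomials `p` of degree ≤ `k`
on the elements of the mesh `M`. -/
def TraceConst (M : Mesh) (k : ℕ) (Cmax : ℝ) : Prop :=
  0 < Cmax ∧ ∀ K ∈ M.T, ∀ f : E2 → ℝ, IsPolyOn k Set.univ f →
    Real.sqrt K.diam * bdryN K f ≤ Cmax * l2N (Tri.toSet K) f

/-- The global BDM interpolation operator, acting elementwise. -/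
def meshBDM (M : Mesh) (k : ℕ) (v : E2 → E2) : Vb := fun K => bdmInterp k K v

/-- The mesh size `h = max_K h_K`. -/
def meshSize (M : Mesh) : ℝ := sSup (Tri.diam '' (M.T : Set Tri))

/-- The broken Sobolev norm `‖u‖_{H^m(T_h)}` of a broken vector field. -/
def brokenNormVec (M : Mesh) (m : ℕ) (u : Vb) : ℝ :=
  Real.sqrt (∑ K ∈ M.T, ∑ j ∈ Finset.range (m + 1), sobSemiVecSq j (Tri.toSet K) (u K))

/-- The broken Sobolev norm `‖p‖_{H^m(T_h)}` of a scalar function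
(the pressure may jump across edges, so each piece is measured on the open element). -/
def brokenNorm (M : Mesh) (m : ℕ) (p : E2 → ℝ) : ℝ :=
  Real.sqrt (∑ K ∈ M.T, ∑ j ∈ Finset.range (m + 1), sobSemiSq j (interior (Tri.toSet K)) p)

/-! On an element `K` the components of `v` are polynomials of degree `k`, so their first
derivatives are polynomials too. The discrete trace inequality applied to these derivatives
gives `h_K ‖∂ₙv‖²_{∂K} ≤ C_max² |v|²_{H¹(K)}`. On each edge `(∂ₙv)_t` has degree `k - 1`, so
the consistency terms only see `Φ^{k-1}((v)_t - ṽ)`; for `ε = -1` they coincide, and Young's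
inequality with weight `h_K / (2 C_max²)` bounds them by
`½ |v|²_{H¹(K)} + (2 C_max² / h_K) ‖Φ^{k-1}(…)‖²`. Hence
`a_K ≥ ½ |v|²_{H¹(K)} + ((τ - 2 C_max²) / h_K) ‖Φ^{k-1}(…)‖²`, which dominates `α` times the
local contribution to `|||(v, ṽ)|||²`; summing over the elements gives the claim. -/

open MvPolynomial

theorem MvPolynomial.totalDegree_pderiv_le {R ι : Type*} [CommSemiring R] [DecidableEq ι]
    (p : MvPolynomial ι R) (i : ι) :
    (pderiv i p).totalDegree ≤ p.totalDegree - 1 := by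
  conv_lhs => rw [p.as_sum, map_sum]
  refine (totalDegree_finsetSum _ _).trans (Finset.sup_le fun s hs => ?_)
  rw [pderiv_monomial]
  by_cases hsi : s i = 0
  · simp [hsi]
  refine (totalDegree_monomial_le _ _).trans ?_
  change ((s - Finsupp.single i 1).sum fun _ n => n) ≤ _
  have hle : Finsupp.single i 1 ≤ s := Finsupp.single_le_iff.2 (Nat.one_le_iff_ne_zero.2 hsi)
  have hsum : ((s - Finsupp.single i 1).sum fun _ n => n) + 1 = s.sum fun _ n => n := by
    conv_rhs => rw [← tsub_add_cancel_of_le hle]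
    rw [Finsupp.sum_add_index' (fun _ => rfl) (fun _ _ _ => rfl)]
    simp
  have := le_totalDegree hs
  omega

section PolynomialFunctions

variable {ι : Type*}

def polyFn (p : MvPolynomial ι ℝ) (x : EuclideanSpace ℝ ι) : ℝ := eval (fun i => x i) p

theorem polyFn_add (p q : MvPolynomial ι ℝ) : polyFn (p + q) = polyFn p + polyFn q := by
  funext x; simp [polyFn]

variable [Fintype ι] [DecidableEq ι]

theorem hasFDerivAt_polyFn (p : MvPolynomial ι ℝ) (x : EuclideanSpace ℝ ι) :
    HasFDerivAt (polyFn p)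
      (∑ i, polyFn (pderiv i p) x • (EuclideanSpace.proj i : EuclideanSpace ℝ ι →L[ℝ] ℝ)) x := by
  induction p using MvPolynomial.induction_on with
  | C a =>
    have hfun : polyFn (C a : MvPolynomial ι ℝ) = fun _ => a := by funext y; simp [polyFn]
    simpa [hfun, polyFn] using hasFDerivAt_const (𝕜 := ℝ) a x
  | add p q hp hq => simpa [polyFn_add, Finset.sum_add_distrib, add_smul] using hp.add hq
  | mul_X p i hp =>
    have hfun : polyFn (p * X i) = fun y => polyFn p y * y i := by funext y; simp [polyFn]
    rw [hfun]
    refine (hp.mul (EuclideanSpace.proj i : EuclideanSpace ℝ ι →L[ℝ] ℝ).hasFDerivAt)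
      |>.congr_fderiv ?_
    ext u
    simp [polyFn, pderiv_X, Pi.single_apply, Finset.sum_add_distrib, add_mul, Finset.mul_sum,
      apply_ite, ite_mul]
    exact Finset.sum_congr rfl fun _ _ => (mul_assoc _ _ _).symm

@[fun_prop]
theorem continuous_polyFn (p : MvPolynomial ι ℝ) : Continuous (polyFn p) :=
  continuous_iff_continuousAt.2 fun x => (hasFDerivAt_polyFn p x).continuousAt

variable {s : Set (EuclideanSpace ℝ ι)} {x : EuclideanSpace ℝ ι}

theorem hasFDerivWithinAt_of_eqOn_polyFn {f : EuclideanSpace ℝ ι → ℝ} {q : MvPolynomial ι ℝ}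
    (hf : ∀ y ∈ s, f y = polyFn q y) (hx : x ∈ s) :
    HasFDerivWithinAt f
      (∑ i, polyFn (pderiv i q) x • (EuclideanSpace.proj i : EuclideanSpace ℝ ι →L[ℝ] ℝ)) s x :=
  (hasFDerivAt_polyFn q x).hasFDerivWithinAt.congr hf (hf x hx)

theorem fderivWithin_apply_of_eqOn_polyFn (hs : UniqueDiffOn ℝ s)
    {v : EuclideanSpace ℝ ι → EuclideanSpace ℝ ι} {p : ι → MvPolynomial ι ℝ}
    (hv : ∀ j, ∀ y ∈ s, v y j = polyFn (p j) y) (hx : x ∈ s) (u : EuclideanSpace ℝ ι) (j : ι) :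
    fderivWithin ℝ v s x u j = ∑ i, polyFn (pderiv i (p j)) x * u i := by
  have hcomp (j : ι) := hasFDerivWithinAt_of_eqOn_polyFn (hv j) hx
  have hdiff : DifferentiableWithinAt ℝ v s x :=
    differentiableWithinAt_euclidean.2 fun j => (hcomp j).differentiableWithinAt
  have h := (hs x hx).eq (hasFDerivWithinAt_euclidean.1 hdiff.hasFDerivWithinAt j) (hcomp j)
  simpa using congrArg (· u) h

end PolynomialFunctions

theorem IsPolyOn.continuousOn {d : ℕ} {S : Set E2} {f : E2 → ℝ} (hf : IsPolyOn d S f) :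
    ContinuousOn f S := by
  obtain ⟨q, -, hq⟩ := hf
  exact (continuous_polyFn q).continuousOn.congr hq

theorem IsPolyOn.memLp {d : ℕ} {S : Set E2} {μ : Measure E2} (hS : MeasurableSet S)
    (hpoly : ∀ q : MvPolynomial (Fin 2) ℝ, MemLp (polyFn q) 2 (μ.restrict S)) {f : E2 → ℝ}
    (hf : IsPolyOn d S f) : MemLp f 2 (μ.restrict S) := by
  obtain ⟨q, -, hq⟩ := hf
  exact (hpoly q).ae_eq ((ae_restrict_iff' hS).2 (ae_of_all _ fun x hx => (hq x hx).symm))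

section L2Projection

variable {d : ℕ} {S : Set E2} {μ : Measure E2}

theorem exists_l2Proj (hS : MeasurableSet S)
    (hpoly : ∀ q : MvPolynomial (Fin 2) ℝ, MemLp (polyFn q) 2 (μ.restrict S))
    {f : E2 → ℝ} (hf : MemLp f 2 (μ.restrict S)) :
    ∃ g : E2 → ℝ, IsPolyOn d S g ∧
      ∀ q : E2 → ℝ, IsPolyOn d S q → ∫ x in S, (f x - g x) * q x ∂μ = 0 := by
  -- `g` is the orthogonal projection of `f` in `L²(S, μ)` onto the image of `P_d`.
  let P := restrictTotalDegree (Fin 2) ℝ d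
  let L : P →ₗ[ℝ] Lp ℝ 2 (μ.restrict S) :=
    { toFun := fun q => (hpoly q).toLp (polyFn q)
      map_add' := fun q r => by simp only [Submodule.coe_add, polyFn_add]; exact MemLp.toLp_add _ _
      map_smul' := fun c q => by
        simp only [SetLike.val_smul, RingHom.id_apply]
        rw [← MemLp.toLp_const_smul]
        congr; funext x; simp [polyFn] }
  let W := LinearMap.range L
  obtain ⟨g, hg⟩ := LinearMap.mem_range.1 (W.orthogonalProjectionOnto (hf.toLp f)).2
  refine ⟨polyFn g, ⟨g, (mem_restrictTotalDegree _ _ _).1 g.2, fun _ _ => rfl⟩, ?_⟩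
  rintro q ⟨Q, hQd, hQ⟩
  let Q' : P := ⟨Q, (mem_restrictTotalDegree _ _ _).2 hQd⟩
  have horth : ⟪hf.toLp f - L g, L Q'⟫ = 0 := by
    rw [hg]
    exact Submodule.starProjection_inner_eq_zero _ _ (LinearMap.mem_range_self _ _)
  rw [L2.inner_def] at horth
  rw [← horth]
  refine integral_congr_ae ?_
  filter_upwards [Lp.coeFn_sub (hf.toLp f) (L g), hf.coeFn_toLp, (hpoly g).coeFn_toLp,
    (hpoly Q).coeFn_toLp, ae_restrict_mem hS] with x h1 h2 h3 h4 hx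
  simp only [L, LinearMap.coe_mk, AddHom.coe_mk] at h1 h3 h4 ⊢
  rw [h1, Pi.sub_apply, h2, h3, h4, hQ x hx, real_inner_comm]
  rfl

theorem l2Proj_spec (hS : MeasurableSet S)
    (hpoly : ∀ q : MvPolynomial (Fin 2) ℝ, MemLp (polyFn q) 2 (μ.restrict S))
    {f : E2 → ℝ} (hf : MemLp f 2 (μ.restrict S)) :
    IsPolyOn d S (l2Proj d S μ f) ∧
      ∀ q : E2 → ℝ, IsPolyOn d S q → ∫ x in S, (f x - l2Proj d S μ f x) * q x ∂μ = 0 :=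
  Classical.epsilon_spec (exists_l2Proj hS hpoly hf)

theorem integral_mul_l2Proj (hS : MeasurableSet S)
    (hpoly : ∀ q : MvPolynomial (Fin 2) ℝ, MemLp (polyFn q) 2 (μ.restrict S))
    {f q : E2 → ℝ} (hf : MemLp f 2 (μ.restrict S)) (hq : IsPolyOn d S q) :
    ∫ x in S, q x * f x ∂μ = ∫ x in S, q x * l2Proj d S μ f x ∂μ := by
  obtain ⟨hproj, horth⟩ := l2Proj_spec (d := d) hS hpoly hf
  have hqL := hq.memLp hS hpoly
  have hqf : Integrable (fun x => q x * f x) (μ.restrict S) := hqL.integrable_mul hf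
  have hqP : Integrable (fun x => q x * l2Proj d S μ f x) (μ.restrict S) :=
    hqL.integrable_mul (hproj.memLp hS hpoly)
  rw [← sub_eq_zero, ← integral_sub hqf hqP, ← horth q hq]
  congr 1; funext x; ring

end L2Projection

namespace Tri

variable (K : Tri) (i : Fin 3)

theorem isCompact_toSet : IsCompact K.toSet := (Set.finite_range K.V).isCompact_convexHull ℝ

theorem measurableSet_toSet : MeasurableSet K.toSet := K.isCompact_toSet.isClosed.measurableSet

theorem uniqueDiffOn_toSet : UniqueDiffOn ℝ K.toSet := by
  refine uniqueDiffOn_convex (convex_convexHull ℝ _) ?_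
  rw [toSet, interior_convexHull_nonempty_iff_affineSpan_eq_top,
    K.indep.affineSpan_eq_top_iff_card_eq_finrank_add_one]
  simp

theorem V_add_one_ne_V_add_two : K.V (i + 1) ≠ K.V (i + 2) := fun h => by
  simpa using K.indep.injective h

theorem diam_pos : 0 < K.diam := by
  have hne : K.V 0 ≠ K.V 1 := by simpa using K.V_add_one_ne_V_add_two 2
  exact (dist_pos.2 hne).trans_le <| Metric.dist_le_diam_of_mem K.isCompact_toSet.isBounded
    (subset_convexHull ℝ _ ⟨0, rfl⟩) (subset_convexHull ℝ _ ⟨1, rfl⟩)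

theorem edge_subset_toSet : K.edge i ⊆ K.toSet :=
  segment_subset_convexHull ⟨_, rfl⟩ ⟨_, rfl⟩

theorem isCompact_edge : IsCompact (K.edge i) := by
  rw [edge, segment_eq_image]
  exact isCompact_Icc.image (by fun_prop)

theorem measurableSet_edge : MeasurableSet (K.edge i) :=
  (K.isCompact_edge i).isClosed.measurableSet

theorem norm_tangent : ‖K.tangent i‖ = 1 := by
  have hne := K.V_add_one_ne_V_add_two i
  rw [tangent, canonTangent]
  split_ifs
  · exact norm_smul_inv_norm (sub_ne_zero.2 hne.symm)
  · exact norm_smul_inv_norm (sub_ne_zero.2 hne)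

theorem norm_normal : ‖K.normal i‖ = 1 := by
  have hne : rot90 (K.V (i + 2) - K.V (i + 1)) ≠ 0 := by
    intro h
    have h0 := congrArg (· 0) h
    have h1 := congrArg (· 1) h
    simp only [rot90, PiLp.add_apply, PiLp.single_apply] at h0 h1
    refine sub_ne_zero.2 (K.V_add_one_ne_V_add_two i).symm ?_
    ext c
    fin_cases c <;> simp at h0 h1 ⊢ <;> linarith
  rw [normal]
  split_ifs
  · rw [norm_neg]; exact norm_smul_inv_norm hne
  · exact norm_smul_inv_norm hne

theorem hausdorffMeasure_edge_ne_top : μH[1] (K.edge i) ≠ ⊤ := by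
  simp [edge, hausdorffMeasure_segment, edist_ne_top]

theorem integrableOn_edge {f : E2 → ℝ} (hf : ContinuousOn f (K.edge i)) :
    IntegrableOn f (K.edge i) μH[1] :=
  hf.integrableOn_of_subset_isCompact (K.isCompact_edge i) (K.measurableSet_edge i) subset_rfl
    (K.hausdorffMeasure_edge_ne_top i)

theorem memLp_edge {f : E2 → ℝ} (hf : ContinuousOn f (K.edge i)) :
    MemLp f 2 (μH[1].restrict (K.edge i)) :=
  (memLp_two_iff_integrable_sq (hf.aestronglyMeasurable (K.measurableSet_edge i))).2
    (K.integrableOn_edge i (hf.pow 2))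

theorem ae_mem_edgeO : ∀ᵐ x ∂μH[1].restrict (K.edge i), x ∈ K.edgeO i := by
  have := Measure.nullSingletonClass_hausdorff E2 (one_pos : (0 : ℝ) < 1)
  rw [ae_restrict_iff' (K.measurableSet_edge i)]
  refine measure_mono_null (fun x hx => ?_)
    ((Set.toFinite {K.V (i + 1), K.V (i + 2)}).measure_zero _)
  by_contra h
  exact hx fun hxE => ⟨hxE, h⟩

theorem memLp_polyFn_edge (q : MvPolynomial (Fin 2) ℝ) :
    MemLp (polyFn q) 2 (μH[1].restrict (K.edge i)) :=
  K.memLp_edge i (continuous_polyFn q).continuousOn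

end Tri

section PlaneDerivatives

variable {s : Set E2} {x : E2}

theorem sum_mul_e2 (a : Fin 2 → ℝ) (c : Fin 2) : ∑ i, a i * e2 c i = a c := by
  simp [e2, PiLp.single_apply]

theorem fderivWithin_e2_of_eqOn_polyFn (hs : UniqueDiffOn ℝ s) {f : E2 → ℝ}
    {q : MvPolynomial (Fin 2) ℝ} (hf : ∀ y ∈ s, f y = polyFn q y) (hx : x ∈ s) (c : Fin 2) :
    fderivWithin ℝ f s x (e2 c) = polyFn (pderiv c q) x := by
  rw [(hasFDerivWithinAt_of_eqOn_polyFn hf hx).fderivWithin (hs x hx)]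
  simpa [mul_comm] using sum_mul_e2 (fun i => polyFn (pderiv i q) x) c

theorem fderivWithin_e2_apply_of_eqOn_polyFn (hs : UniqueDiffOn ℝ s) {v : E2 → E2}
    {p : Fin 2 → MvPolynomial (Fin 2) ℝ} (hv : ∀ j, ∀ y ∈ s, v y j = polyFn (p j) y)
    (hx : x ∈ s) (c j : Fin 2) :
    fderivWithin ℝ v s x (e2 c) j = polyFn (pderiv c (p j)) x := by
  rw [fderivWithin_apply_of_eqOn_polyFn hs hv hx, sum_mul_e2]

theorem sobSemiSq_one (S : Set E2) (f : E2 → ℝ) :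
    sobSemiSq 1 S f = ∑ c : Fin 2, ∫ x in S, dWi S c f x ^ 2 := by
  simp [sobSemiSq, pderivW, Finset.sum_range_succ, add_comm]

theorem sobSemiVecSq_nonneg (m : ℕ) (S : Set E2) (v : E2 → E2) : 0 ≤ sobSemiVecSq m S v :=
  Finset.sum_nonneg fun _ _ => Finset.sum_nonneg fun _ _ => integral_nonneg fun _ => sq_nonneg _

end PlaneDerivatives

theorem diam_mul_bdrySq_le {K : Tri} {f : E2 → ℝ} {C : ℝ}
    (h : √K.diam * bdryN K f ≤ C * l2N K.toSet f) :
    K.diam * bdrySq K f ≤ C ^ 2 * l2Sq K.toSet f := by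
  have hb : 0 ≤ bdrySq K f := Finset.sum_nonneg fun i _ => integral_nonneg fun x => sq_nonneg _
  have hl : 0 ≤ l2Sq K.toSet f := integral_nonneg fun x => sq_nonneg _
  have := pow_le_pow_left₀ (by rw [bdryN]; positivity) h 2
  rwa [mul_pow, mul_pow, bdryN, l2N, Real.sq_sqrt K.diam_pos.le, Real.sq_sqrt hb,
    Real.sq_sqrt hl] at this

section Element

variable {K : Tri} {v : E2 → E2} {p : Fin 2 → MvPolynomial (Fin 2) ℝ} {x : E2}

theorem sobSemiVecSq_one_eq_sum (hp : ∀ j, ∀ y ∈ K.toSet, v y j = polyFn (p j) y) :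
    sobSemiVecSq 1 K.toSet v = ∑ j, ∑ c, ∫ x in K.toSet, polyFn (pderiv c (p j)) x ^ 2 := by
  refine Finset.sum_congr rfl fun j _ => ?_
  rw [sobSemiSq_one]
  refine Finset.sum_congr rfl fun c _ => setIntegral_congr_fun K.measurableSet_toSet fun x hx => ?_
  simp only [dWi, fderivWithin_e2_of_eqOn_polyFn K.uniqueDiffOn_toSet (hp j) hx]

theorem integral_sum_inner_fderivWithin (hp : ∀ j, ∀ y ∈ K.toSet, v y j = polyFn (p j) y) :
    ∫ x in K.toSet, ∑ c : Fin 2,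
        ⟪fderivWithin ℝ v K.toSet x (e2 c), fderivWithin ℝ v K.toSet x (e2 c)⟫
      = sobSemiVecSq 1 K.toSet v := by
  have hint (c j : Fin 2) : IntegrableOn (fun x => polyFn (pderiv c (p j)) x ^ 2) K.toSet :=
    ((continuous_polyFn _).pow 2).continuousOn.integrableOn_compact K.isCompact_toSet
  rw [sobSemiVecSq_one_eq_sum hp, Finset.sum_comm, setIntegral_congr_fun K.measurableSet_toSet
    (g := fun x => ∑ c, ∑ j, polyFn (pderiv c (p j)) x ^ 2) fun x hx => ?_,
    integral_finsetSum _ fun c _ => integrable_finsetSum _ fun j _ => hint c j]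
  · exact Finset.sum_congr rfl fun c _ => integral_finsetSum _ fun j _ => hint c j
  · simp only [real_inner_self_eq_norm_sq, EuclideanSpace.real_norm_sq_eq,
      fderivWithin_e2_apply_of_eqOn_polyFn K.uniqueDiffOn_toSet hp hx]

theorem norm_fderivWithin_sq_eq (hp : ∀ j, ∀ y ∈ K.toSet, v y j = polyFn (p j) y)
    (hx : x ∈ K.toSet) (u : E2) :
    ‖fderivWithin ℝ v K.toSet x u‖ ^ 2 = ∑ j, (∑ c, polyFn (pderiv c (p j)) x * u c) ^ 2 := by
  simp only [EuclideanSpace.real_norm_sq_eq,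
    fderivWithin_apply_of_eqOn_polyFn K.uniqueDiffOn_toSet hp hx]

theorem norm_fderivWithin_normal_sq_le (hp : ∀ j, ∀ y ∈ K.toSet, v y j = polyFn (p j) y)
    (hx : x ∈ K.toSet) (i : Fin 3) :
    ‖fderivWithin ℝ v K.toSet x (K.normal i)‖ ^ 2 ≤ ∑ j, ∑ c, polyFn (pderiv c (p j)) x ^ 2 := by
  have hn : ∑ c, K.normal i c ^ 2 = 1 := by
    rw [← EuclideanSpace.real_norm_sq_eq, K.norm_normal, one_pow]
  rw [norm_fderivWithin_sq_eq hp hx]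
  refine Finset.sum_le_sum fun j _ => ?_
  simpa [hn] using Finset.sum_mul_sq_le_sq_mul_sq Finset.univ
    (fun c => polyFn (pderiv c (p j)) x) (K.normal i)

theorem dnt_eq_polyFn (hp : ∀ j, ∀ y ∈ K.toSet, v y j = polyFn (p j) y) (hx : x ∈ K.toSet)
    (i : Fin 3) :
    dnt K i v x = polyFn (∑ j, ∑ c, C (K.tangent i j * K.normal i c) * pderiv c (p j)) x := by
  simp [dnt, PiLp.inner_apply, fderivWithin_apply_of_eqOn_polyFn K.uniqueDiffOn_toSet hp hx,
    polyFn]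
  ring

theorem tComp_eq_polyFn (hp : ∀ j, ∀ y ∈ K.toSet, v y j = polyFn (p j) y) (hx : x ∈ K.toSet)
    (i : Fin 3) : tComp K i v x = polyFn (∑ j, C (K.tangent i j) * p j) x := by
  simp [tComp, PiLp.inner_apply, hp _ x hx, polyFn]

theorem diam_mul_sum_integral_normal_sq_le {k : ℕ} {C : ℝ}
    (hp : ∀ j, ∀ y ∈ K.toSet, v y j = polyFn (p j) y) (hpd : ∀ j, (p j).totalDegree ≤ k)
    (trace : ∀ f : E2 → ℝ, IsPolyOn k Set.univ f → √K.diam * bdryN K f ≤ C * l2N K.toSet f) :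
    K.diam * ∑ i : Fin 3, ∫ x in K.edge i, ‖fderivWithin ℝ v K.toSet x (K.normal i)‖ ^ 2 ∂μH[1]
      ≤ C ^ 2 * sobSemiVecSq 1 K.toSet v := by
  have hint (i : Fin 3) (j c : Fin 2) :
      Integrable (fun x => polyFn (pderiv c (p j)) x ^ 2) (μH[1].restrict (K.edge i)) :=
    K.integrableOn_edge i ((continuous_polyFn _).pow 2).continuousOn
  have hedge (i : Fin 3) :
      ∫ x in K.edge i, ‖fderivWithin ℝ v K.toSet x (K.normal i)‖ ^ 2 ∂μH[1]
        ≤ ∑ j, ∑ c, ∫ x in K.edge i, polyFn (pderiv c (p j)) x ^ 2 ∂μH[1] := by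
    simp only [← integral_finsetSum _ fun j _ => integrable_finsetSum _ fun c _ => hint i j c,
      ← integral_finsetSum _ fun c _ => hint i _ c]
    refine integral_mono_of_nonneg (ae_of_all _ fun x => sq_nonneg _)
      (integrable_finsetSum _ fun j _ => integrable_finsetSum _ fun c _ => hint i j c) ?_
    exact (ae_restrict_iff' (K.measurableSet_edge i)).2 (ae_of_all _ fun x hx =>
      norm_fderivWithin_normal_sq_le hp (K.edge_subset_toSet i hx) i)
  have hdeg (j c : Fin 2) : IsPolyOn k Set.univ (polyFn (pderiv c (p j))) :=
    ⟨_, (totalDegree_pderiv_le _ _).trans (by have := hpd j; omega), fun _ _ => rfl⟩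
  calc K.diam * ∑ i : Fin 3, ∫ x in K.edge i,
        ‖fderivWithin ℝ v K.toSet x (K.normal i)‖ ^ 2 ∂μH[1]
      ≤ ∑ j, ∑ c, K.diam * bdrySq K (polyFn (pderiv c (p j))) := by
        simp only [bdrySq, ← Finset.mul_sum]
        refine mul_le_mul_of_nonneg_left ?_ K.diam_pos.le
        refine (Finset.sum_le_sum fun i _ => hedge i).trans_eq ?_
        rw [Finset.sum_comm]
        exact Finset.sum_congr rfl fun j _ => Finset.sum_comm
    _ ≤ ∑ j, ∑ c, C ^ 2 * l2Sq K.toSet (polyFn (pderiv c (p j))) := by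
        exact Finset.sum_le_sum fun j _ => Finset.sum_le_sum fun c _ =>
          diam_mul_bdrySq_le (trace _ (hdeg j c))
    _ = C ^ 2 * sobSemiVecSq 1 K.toSet v := by
        simp only [sobSemiVecSq_one_eq_sum hp, l2Sq, Finset.mul_sum]

theorem isPolyOn_dnt {k : ℕ} (hp : ∀ j, ∀ y ∈ K.toSet, v y j = polyFn (p j) y)
    (hpd : ∀ j, (p j).totalDegree ≤ k) (i : Fin 3) : IsPolyOn (k - 1) (K.edge i) (dnt K i v) := by
  refine ⟨_, ?_, fun x hx => dnt_eq_polyFn hp (K.edge_subset_toSet i hx) i⟩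
  refine (totalDegree_finsetSum _ _).trans (Finset.sup_le fun j _ => ?_)
  refine (totalDegree_finsetSum _ _).trans (Finset.sup_le fun c _ => ?_)
  refine (totalDegree_mul _ _).trans ?_
  rw [totalDegree_C, zero_add]
  exact (totalDegree_pderiv_le _ _).trans (Nat.sub_le_sub_right (hpd j) 1)

theorem continuousOn_dnt (hp : ∀ j, ∀ y ∈ K.toSet, v y j = polyFn (p j) y) (i : Fin 3) :
    ContinuousOn (dnt K i v) (K.edge i) :=
  (continuous_polyFn _).continuousOn.congr fun _ hx => dnt_eq_polyFn hp (K.edge_subset_toSet i hx) i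

theorem continuousOn_norm_fderivWithin_normal_sq
    (hp : ∀ j, ∀ y ∈ K.toSet, v y j = polyFn (p j) y) (i : Fin 3) :
    ContinuousOn (fun x => ‖fderivWithin ℝ v K.toSet x (K.normal i)‖ ^ 2) (K.edge i) :=
  (by fun_prop : Continuous fun x =>
      ∑ j, (∑ c, polyFn (pderiv c (p j)) x * K.normal i c) ^ 2).continuousOn.congr
    fun _ hx => norm_fderivWithin_sq_eq hp (K.edge_subset_toSet i hx) _

theorem memLp_tComp_sub {d : ℕ} {vt : E2 → ℝ} (hp : ∀ j, ∀ y ∈ K.toSet, v y j = polyFn (p j) y)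
    (i : Fin 3) (hvt : IsPolyOn d (K.edgeO i) vt) :
    MemLp (fun x => tComp K i v x - vt x) 2 (μH[1].restrict (K.edge i)) := by
  obtain ⟨Q, -, hQ⟩ := hvt
  have hcont : ContinuousOn (fun x => tComp K i v x - polyFn Q x) (K.edge i) :=
    (by fun_prop : Continuous fun x => polyFn (∑ j, C (K.tangent i j) * p j) x - polyFn Q x)
      |>.continuousOn.congr fun x hx => by rw [tComp_eq_polyFn hp (K.edge_subset_toSet i hx)]
  refine (K.memLp_edge i hcont).ae_eq ?_
  filter_upwards [K.ae_mem_edgeO i] with x hx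
  rw [hQ x hx]
  rfl

theorem integral_dnt_mul_tComp_sub {k d : ℕ} {vt : E2 → ℝ}
    (hp : ∀ j, ∀ y ∈ K.toSet, v y j = polyFn (p j) y) (hpd : ∀ j, (p j).totalDegree ≤ k)
    (i : Fin 3) (hvt : IsPolyOn d (K.edgeO i) vt) :
    ∫ x in K.edge i, dnt K i v x * (tComp K i v x - vt x) ∂μH[1]
      = ∫ x in K.edge i, dnt K i v x *
          edgeProj (k - 1) (K.edge i) (fun y => tComp K i v y - vt y) x ∂μH[1] :=
  integral_mul_l2Proj (K.measurableSet_edge i) (K.memLp_polyFn_edge i) (memLp_tComp_sub hp i hvt)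
    (isPolyOn_dnt hp hpd i)

theorem two_mul_integral_dnt_mul_le (hp : ∀ j, ∀ y ∈ K.toSet, v y j = polyFn (p j) y)
    (i : Fin 3) {g : E2 → ℝ} (hg : ContinuousOn g (K.edge i)) {δ : ℝ} (hδ : 0 < δ) :
    2 * ∫ x in K.edge i, dnt K i v x * g x ∂μH[1]
      ≤ δ * ∫ x in K.edge i, ‖fderivWithin ℝ v K.toSet x (K.normal i)‖ ^ 2 ∂μH[1]
        + δ⁻¹ * ∫ x in K.edge i, g x ^ 2 ∂μH[1] := by
  have hN := continuousOn_norm_fderivWithin_normal_sq hp i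
  have hN' : IntegrableOn (fun x => δ * ‖fderivWithin ℝ v K.toSet x (K.normal i)‖ ^ 2)
      (K.edge i) μH[1] := K.integrableOn_edge i (continuousOn_const.mul hN)
  have hg' : IntegrableOn (fun x => δ⁻¹ * g x ^ 2) (K.edge i) μH[1] :=
    K.integrableOn_edge i (continuousOn_const.mul (hg.pow 2))
  rw [← integral_const_mul, ← integral_const_mul, ← integral_const_mul, ← integral_add hN' hg']
  refine setIntegral_mono_on
    (K.integrableOn_edge i (continuousOn_const.mul ((continuousOn_dnt hp i).mul hg)))
    (hN'.add hg') (K.measurableSet_edge i) fun x _ => ?_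
  have hinner := abs_real_inner_le_norm (fderivWithin ℝ v K.toSet x (K.normal i)) (K.tangent i)
  rw [K.norm_tangent, mul_one] at hinner
  have hdnt : dnt K i v x ^ 2 ≤ ‖fderivWithin ℝ v K.toSet x (K.normal i)‖ ^ 2 :=
    sq_le_sq' (abs_le.1 hinner).1 (abs_le.1 hinner).2
  linarith [two_mul_le_add_mul_sq (a := dnt K i v x) (b := g x) hδ,
    mul_le_mul_of_nonneg_left hdnt hδ.le]

end Element

theorem ellipticity_bound {h C τ A B S X : ℝ} (hh : 0 < h) (hC : 0 < C) (hτ : 2 * C ^ 2 < τ)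
    (hA : 0 ≤ A) (hS : 0 ≤ S) (hB : h * B ≤ C ^ 2 * A)
    (hX : 2 * X ≤ h / (2 * C ^ 2) * B + (h / (2 * C ^ 2))⁻¹ * S) :
    min (1 / 2) ((τ - 2 * C ^ 2) / τ) / (1 + C ^ 2) * (A + h * B + τ / h * S)
      ≤ A - 2 * X + τ / h * S := by
  set m := min (1 / 2) ((τ - 2 * C ^ 2) / τ)
  have hτ0 : 0 < τ := lt_of_le_of_lt (by positivity) hτ
  have hm0 : 0 ≤ m := le_min (by norm_num) (div_nonneg (by linarith) hτ0.le)
  have hmτ : m * τ ≤ τ - 2 * C ^ 2 := (le_div_iff₀ hτ0).1 (min_le_right _ _)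
  have hδB : h / (2 * C ^ 2) * B ≤ A / 2 := by
    rw [div_mul_eq_mul_div, div_le_iff₀ (by positivity)]
    nlinarith
  have hδS : (h / (2 * C ^ 2))⁻¹ * S = τ / h * S - (τ - 2 * C ^ 2) / h * S := by
    rw [inv_div]; ring
  calc m / (1 + C ^ 2) * (A + h * B + τ / h * S)
      ≤ m / (1 + C ^ 2) * ((1 + C ^ 2) * A + τ / h * S) := by gcongr; linarith
    _ = m * A + m / (1 + C ^ 2) * (τ / h * S) := by field_simp
    _ ≤ 1 / 2 * A + m * (τ / h * S) := by
        gcongr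
        · exact min_le_left _ _
        · exact div_le_self hm0 (by nlinarith)
    _ = A / 2 + m * τ / h * S := by ring
    _ ≤ A / 2 + (τ - 2 * C ^ 2) / h * S := by gcongr
    _ ≤ A - 2 * X + τ / h * S := by linarith

def aFormLocal (k : ℕ) (ν τ ε : ℝ) (K : Tri) (w : E2 → E2) (wt : E2 → ℝ) (v : E2 → E2)
    (vt : E2 → ℝ) : ℝ :=
  (∫ x in K.toSet, ν * ∑ c : Fin 2,
      ⟪fderivWithin ℝ w K.toSet x (e2 c), fderivWithin ℝ v K.toSet x (e2 c)⟫)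
    - ∑ i : Fin 3, ∫ x in K.edge i, ν * dnt K i w x * (tComp K i v x - vt x) ∂μH[1]
    + ε * ∑ i : Fin 3, ∫ x in K.edge i, ν * (tComp K i w x - wt x) * dnt K i v x ∂μH[1]
    + ν * (τ / K.diam) * ∑ i : Fin 3, ∫ x in K.edge i,
        edgeProj (k - 1) (K.edge i) (fun y => tComp K i w y - wt y) x *
          edgeProj (k - 1) (K.edge i) (fun y => tComp K i v y - vt y) x ∂μH[1]

theorem aForm_eq_sum_aFormLocal (M : Mesh) (k : ℕ) (ν τ ε : ℝ) (w : Vb) (wt : E2 → ℝ) (v : Vb)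
    (vt : E2 → ℝ) :
    aForm M k ν τ ε w wt v vt = ∑ K ∈ M.T, aFormLocal k ν τ ε K (w K) wt (v K) vt := rfl

def tnormSqLocal (k : ℕ) (τ : ℝ) (K : Tri) (w : E2 → E2) (wt : E2 → ℝ) : ℝ :=
  sobSemiVecSq 1 K.toSet w
    + K.diam * ∑ i : Fin 3, ∫ x in K.edge i,
        ‖fderivWithin ℝ w K.toSet x (K.normal i)‖ ^ 2 ∂μH[1]
    + (τ / K.diam) * ∑ i : Fin 3, ∫ x in K.edge i,
        (edgeProj (k - 1) (K.edge i) (fun y => tComp K i w y - wt y) x) ^ 2 ∂μH[1]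

theorem tnormSq_eq_mul_sum_tnormSqLocal (M : Mesh) (k : ℕ) (ν τ : ℝ) (w : Vb) (wt : E2 → ℝ) :
    tnormSq M k ν τ w wt = ν * ∑ K ∈ M.T, tnormSqLocal k τ K (w K) wt := rfl

theorem tnormSqLocal_le_aFormLocal {k : ℕ} {ν τ C : ℝ} (hν : 0 ≤ ν) (hC : 0 < C)
    (hτ : 2 * C ^ 2 < τ) {K : Tri}
    (trace : ∀ f : E2 → ℝ, IsPolyOn k Set.univ f → √K.diam * bdryN K f ≤ C * l2N K.toSet f)
    {v : E2 → E2} (hv : IsPolyVecOn k K.toSet v) {vt : E2 → ℝ}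
    (hvt : ∀ i, IsPolyOn (k - 1) (K.edgeO i) vt) :
    min (1 / 2) ((τ - 2 * C ^ 2) / τ) / (1 + C ^ 2) * (ν * tnormSqLocal k τ K v vt)
      ≤ aFormLocal k ν τ (-1) K v vt v vt := by
  choose p hpd hp using hv
  set Φ := fun i => edgeProj (k - 1) (K.edge i) (fun y => tComp K i v y - vt y)
  have hΦ (i : Fin 3) : ContinuousOn (Φ i) (K.edge i) :=
    (l2Proj_spec (K.measurableSet_edge i) (K.memLp_polyFn_edge i)
      (memLp_tComp_sub hp i (hvt i))).1.continuousOn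
  set X := ∑ i, ∫ x in K.edge i, dnt K i v x * Φ i x ∂μH[1]
  have hcons : ∑ i, ∫ x in K.edge i, ν * dnt K i v x * (tComp K i v x - vt x) ∂μH[1]
      = ν * X := by
    simp only [X, mul_assoc, integral_const_mul, integral_dnt_mul_tComp_sub hp hpd _ (hvt _),
      Finset.mul_sum, Φ]
  have hsymm : ∑ i, ∫ x in K.edge i, ν * (tComp K i v x - vt x) * dnt K i v x ∂μH[1]
      = ν * X := by
    rw [← hcons]
    exact Finset.sum_congr rfl fun i _ => integral_congr_ae (ae_of_all _ fun x => by ring)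
  have hδ : 0 < K.diam / (2 * C ^ 2) := div_pos K.diam_pos (by positivity)
  have hX : 2 * X ≤ K.diam / (2 * C ^ 2) * ∑ i : Fin 3, ∫ x in K.edge i,
        ‖fderivWithin ℝ v K.toSet x (K.normal i)‖ ^ 2 ∂μH[1]
      + (K.diam / (2 * C ^ 2))⁻¹ * ∑ i : Fin 3, ∫ x in K.edge i, Φ i x ^ 2 ∂μH[1] := by
    simp only [X, Finset.mul_sum, ← Finset.sum_add_distrib]
    exact Finset.sum_le_sum fun i _ => two_mul_integral_dnt_mul_le hp i (hΦ i) hδ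
  have hbound := ellipticity_bound K.diam_pos hC hτ (sobSemiVecSq_nonneg 1 K.toSet v)
    (Finset.sum_nonneg fun i _ => integral_nonneg fun x => sq_nonneg (Φ i x))
    (diam_mul_sum_integral_normal_sq_le hp hpd trace) hX
  rw [aFormLocal, integral_const_mul, integral_sum_inner_fderivWithin hp, hcons, hsymm]
  simp only [← sq]
  calc _ = ν * (min (1 / 2) ((τ - 2 * C ^ 2) / τ) / (1 + C ^ 2) * tnormSqLocal k τ K v vt) := by
        ring
    _ ≤ _ := mul_le_mul_of_nonneg_left hbound hν
    _ = _ := by ring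

theorem ellipticity_symmetric_general (M : Mesh) (k : ℕ) (ν τ : ℝ)
    (hν : 0 < ν) (Cmax : ℝ) (hC : TraceConst M k Cmax) (hτ : 2 * Cmax ^ 2 < τ)
    (v : Vb) (vt : E2 → ℝ) (hv : MemBDM M k v) (hvt : MemM0 M (k - 1) vt) :
    (min (1 / 2) ((τ - 2 * Cmax ^ 2) / τ) / (1 + Cmax ^ 2)) * tnormSq M k ν τ v vt
      ≤ aForm M k ν τ (-1) v vt v vt := by
  rw [tnormSq_eq_mul_sum_tnormSqLocal, aForm_eq_sum_aFormLocal, Finset.mul_sum, Finset.mul_sum]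
  exact Finset.sum_le_sum fun K hK =>
    tnormSqLocal_le_aFormLocal hν.le hC.1 hτ (hC.2 K hK) (hv.1 K hK) (hvt.1 K hK)

/-- Lemma 4, case `ε = -1`: ellipticity of `a` for `τ` large. If
`ε = -1` and `τ > 2 C_max²`, then `a` is elliptic on `V_h`: with
`C = min {1/2, (τ - 2C_max²)/τ}` and `α = C/(1 + C_max²)`,
`a((v_h, ṽ_h), (v_h, ṽ_h)) ≥ α |||(v_h, ṽ_h)|||²` for all `(v_h, ṽ_h) ∈ V_h`. -/
theorem ellipticity_symmetric (M : Mesh) (k : ℕ) (hk : 1 ≤ k) (ν τ : ℝ)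
    (hν : 0 < ν) (Cmax : ℝ) (hC : TraceConst M k Cmax) (hτ : 2 * Cmax ^ 2 < τ)
    (v : Vb) (vt : E2 → ℝ) (hv : MemBDM M k v) (hvt : MemM0 M (k - 1) vt) :
    (min (1 / 2) ((τ - 2 * Cmax ^ 2) / τ) / (1 + Cmax ^ 2)) * tnormSq M k ν τ v vt
      ≤ aForm M k ν τ (-1) v vt v vt :=
  ellipticity_symmetric_general M k ν τ hν Cmax hC hτ v vt hv hvt

end
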